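/- arXiv:1203.5437 — 6 statements merged into one kernel-verified Lean document; each statement's English description precedes it below -/
import Mathlib

section
/- Let 𝒰 be a compact Borel control set, Y a Borel space, Q a transition kernel assigning to each u ∈ 𝒰 a probability measure Q(·|u) on Y, φ : 𝒰 × Y → ℝ a bounded measurable function, and α ∈ (0,1). For a probability measure λ on 𝒰 define F(λ) = inf_{η ∈ ℝ} { η + (1/α) ∫_𝒰 ∫_Y (φ(u,y) − η)₊ Q(dy|u) λ(du) }. Then the infimum of F(λ) over all probability measures λ on 𝒰 equals the infimum of F(δ_u) over all u ∈ 𝒰, where δ_u is the Dirac measure at u; that is, for the Average Value at Risk transition mapping, deterministic controls achieve the same optimal value as randomized controls. -/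
open MeasureTheory ProbabilityTheory Filter Topology

/-- **Deterministic controls suffice for the Average Value at Risk transition mapping.**
Let `𝒰` be a compact Borel control set, `Y` a Borel space, `Q` a Markov kernel from `𝒰` to
`Y`, `φ : 𝒰 × Y → ℝ` bounded measurable, and `α ∈ (0,1)`. For a probability measure `λ`
on `𝒰`, let `F(λ) = inf_{η ∈ ℝ} { η + (1/α) ∫_𝒰 ∫_Y (φ(u,y) − η)₊ Q(dy|u) λ(du) }`.
Then the infimum of `F(λ)` over all probability measures `λ` equals the infimum of
`F(δ_u)` over all `u ∈ 𝒰`. -/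
theorem avar_randomized_equals_deterministic
    {𝒰 Y : Type*} [MeasurableSpace 𝒰] [TopologicalSpace 𝒰] [CompactSpace 𝒰]
    [BorelSpace 𝒰] [MeasurableSpace Y]
    (Q : Kernel 𝒰 Y) [IsMarkovKernel Q]
    (φ : 𝒰 × Y → ℝ) (hφm : Measurable φ) (C : ℝ) (hφb : ∀ z, |φ z| ≤ C)
    (α : ℝ) (hα0 : 0 < α) (hα1 : α < 1) :
    let F : Measure 𝒰 → ℝ := fun lam =>
      ⨅ η : ℝ, (η + (1 / α) * ∫ u, (∫ y, max (φ (u, y) - η) 0 ∂(Q u)) ∂lam)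
    (⨅ lam : {lam : Measure 𝒰 // IsProbabilityMeasure lam}, F lam.1)
      = ⨅ u : 𝒰, F (Measure.dirac u) := by
  intro F
  rcases isEmpty_or_nonempty 𝒰 with hU | hU
  · -- degenerate case: no controls, both sides are the junk value `sInf ∅ = 0`
    have h2 : IsEmpty {lam : Measure 𝒰 // IsProbabilityMeasure lam} := by
      constructor
      rintro ⟨lam, hlam⟩
      have h1 := hlam.measure_univ
      rw [Set.univ_eq_empty_iff.mpr hU, measure_empty] at h1
      exact zero_ne_one h1
    rw [Real.iInf_of_isEmpty, Real.iInf_of_isEmpty]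
  · -- main case
    obtain ⟨u₀⟩ := hU
    haveI : Nonempty 𝒰 := ⟨u₀⟩
    have hY : Nonempty Y := by
      by_contra hY
      haveI : IsEmpty Y := not_nonempty_iff.mp hY
      have h1 : (Q u₀) Set.univ = 1 := measure_univ
      rw [Set.univ_eq_empty_iff.mpr ‹IsEmpty Y›, measure_empty] at h1
      exact zero_ne_one h1
    obtain ⟨y₀⟩ := hY
    have hC : 0 ≤ C := le_trans (abs_nonneg _) (hφb (u₀, y₀))
    set B : ℝ := -(1 / α * C) with hB
    have hα : (0:ℝ) < 1 / α := by positivity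
    -- the key elementary inequality
    have key : ∀ η t : ℝ, 0 ≤ t → -C - η ≤ t → B ≤ η + 1 / α * t := by
      intro η t ht ht2
      rcases le_or_gt 0 η with hη | hη
      · have h1 : 0 ≤ 1 / α * t := by positivity
        have h2 : 0 ≤ 1 / α * C := by positivity
        rw [hB]; linarith
      · have h1α : (1:ℝ) ≤ 1 / α := by
          rw [le_div_iff₀ hα0]; linarith
        have h2 : 1 / α * (-C - η) ≤ 1 / α * t :=
          mul_le_mul_of_nonneg_left ht2 hα.le
        have h3 : 0 ≤ (-η) * (1 / α - 1) :=
          mul_nonneg (by linarith) (by linarith)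
        rw [hB]; nlinarith [h2, h3]
    -- measurability and bounds for the inner integral
    have hmax_meas : ∀ η : ℝ, Measurable fun p : 𝒰 × Y => max (φ p - η) 0 :=
      fun η => (hφm.sub measurable_const).max measurable_const
    have hg : ∀ η : ℝ, StronglyMeasurable fun u => ∫ y, max (φ (u, y) - η) 0 ∂(Q u) :=
      fun η => (hmax_meas η).stronglyMeasurable.integral_kernel_prod_right'
    have hint : ∀ (η : ℝ) (u : 𝒰), Integrable (fun y => max (φ (u, y) - η) 0) (Q u) := by
      intro η u
      refine (integrable_const (C + |η|)).mono'
        ((hmax_meas η).comp measurable_prodMk_left).aestronglyMeasurable ?_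
      filter_upwards with y
      rw [Real.norm_eq_abs, abs_of_nonneg (le_max_right _ _)]
      refine max_le ?_ (by positivity)
      have h1 := (abs_le.mp (hφb (u, y))).2
      have h2 := neg_abs_le η
      linarith
    have hg_nonneg : ∀ (η : ℝ) (u : 𝒰), 0 ≤ ∫ y, max (φ (u, y) - η) 0 ∂(Q u) :=
      fun η u => integral_nonneg fun y => le_max_right _ _
    have hg_lb : ∀ (η : ℝ) (u : 𝒰), -C - η ≤ ∫ y, max (φ (u, y) - η) 0 ∂(Q u) := by
      intro η u
      have h1 : ∫ _ : Y, (-C - η : ℝ) ∂(Q u) = -C - η := by simp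
      rw [← h1]
      refine integral_mono (integrable_const _) (hint η u) fun y => ?_
      have h2 := (abs_le.mp (hφb (u, y))).1
      calc -C - η ≤ φ (u, y) - η := by linarith
        _ ≤ max (φ (u, y) - η) 0 := le_max_left _ _
    have hg_ub : ∀ (η : ℝ) (u : 𝒰), ∫ y, max (φ (u, y) - η) 0 ∂(Q u) ≤ C + |η| := by
      intro η u
      have h1 : ∫ _ : Y, (C + |η| : ℝ) ∂(Q u) = C + |η| := by simp
      rw [← h1]
      refine integral_mono (hint η u) (integrable_const _) fun y => ?_
      refine max_le ?_ (by positivity)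
      have h2 := (abs_le.mp (hφb (u, y))).2
      have h3 := neg_abs_le η
      linarith
    -- F at a Dirac measure
    have hFdirac : ∀ u : 𝒰, F (Measure.dirac u)
        = ⨅ η : ℝ, (η + 1 / α * ∫ y, max (φ (u, y) - η) 0 ∂(Q u)) := by
      intro u
      simp only [F]
      congr 1
      ext η
      rw [integral_dirac' _ u (hg η)]
    have hterm_lb : ∀ (η : ℝ) (u : 𝒰),
        B ≤ η + 1 / α * ∫ y, max (φ (u, y) - η) 0 ∂(Q u) :=
      fun η u => key η _ (hg_nonneg η u) (hg_lb η u)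
    have hFd_lb : ∀ u : 𝒰, B ≤ F (Measure.dirac u) := by
      intro u
      rw [hFdirac u]
      exact le_ciInf fun η => hterm_lb η u
    have hBBd : BddBelow (Set.range fun u : 𝒰 => F (Measure.dirac u)) := by
      refine ⟨B, ?_⟩
      rintro x ⟨u, rfl⟩
      exact hFd_lb u
    -- integrability of the outer integrand and lower bound for F of any probability measure
    have hgint : ∀ (η : ℝ) (lam : Measure 𝒰) (_ : IsProbabilityMeasure lam),
        Integrable (fun u => ∫ y, max (φ (u, y) - η) 0 ∂(Q u)) lam := by
      intro η lam hlam
      refine (integrable_const (C + |η|)).mono' (hg η).aestronglyMeasurable ?_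
      filter_upwards with u
      rw [Real.norm_eq_abs, abs_of_nonneg (hg_nonneg η u)]
      exact hg_ub η u
    have hF_lb : ∀ (lam : Measure 𝒰) (_ : IsProbabilityMeasure lam), B ≤ F lam := by
      intro lam hlam
      haveI := hlam
      refine le_ciInf fun η => key η _ ?_ ?_
      · exact integral_nonneg fun u => hg_nonneg η u
      · have h1 : ∫ _ : 𝒰, (-C - η : ℝ) ∂lam = -C - η := by simp
        rw [← h1]
        exact integral_mono (integrable_const _) (hgint η lam hlam) fun u => hg_lb η u
    refine le_antisymm ?_ ?_
    · -- ≤ : Dirac measures are particular probability measures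
      refine le_ciInf fun u => ?_
      haveI : IsProbabilityMeasure (Measure.dirac u) := inferInstance
      have h1 : BddBelow (Set.range fun lam : {lam : Measure 𝒰 // IsProbabilityMeasure lam}
          => F lam.1) := by
        refine ⟨B, ?_⟩
        rintro x ⟨⟨lam, hlam⟩, rfl⟩
        exact hF_lb lam hlam
      exact ciInf_le h1 ⟨Measure.dirac u, this⟩
    · -- ≥ : any randomized control is dominated by the best deterministic one
      haveI : Nonempty {lam : Measure 𝒰 // IsProbabilityMeasure lam} :=
        ⟨⟨Measure.dirac u₀, inferInstance⟩⟩
      refine le_ciInf ?_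
      rintro ⟨lam, hlam⟩
      haveI := hlam
      refine le_ciInf fun η => ?_
      have h1 : ∀ u : 𝒰, (⨅ u : 𝒰, F (Measure.dirac u))
          ≤ η + 1 / α * ∫ y, max (φ (u, y) - η) 0 ∂(Q u) := by
        intro u
        refine le_trans (ciInf_le hBBd u) ?_
        rw [hFdirac u]
        exact ciInf_le ⟨B, by rintro x ⟨η', rfl⟩; exact hterm_lb η' u⟩ η
      calc (⨅ u : 𝒰, F (Measure.dirac u))
          = ∫ _ : 𝒰, (⨅ u : 𝒰, F (Measure.dirac u)) ∂lam := by simp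
        _ ≤ ∫ u, (η + 1 / α * ∫ y, max (φ (u, y) - η) 0 ∂(Q u)) ∂lam :=
            integral_mono (integrable_const _)
              ((integrable_const η).add ((hgint η lam hlam).const_mul _)) h1
        _ = η + 1 / α * ∫ u, (∫ y, max (φ (u, y) - η) 0 ∂(Q u)) ∂lam := by
            rw [integral_add (integrable_const η) ((hgint η lam hlam).const_mul _),
              integral_const, integral_const_mul]
            simp
end

section
/- Dual representation of the first-order mean–semideviation: let (X, ℬ, m) be a probability space, κ ∈ [0,1], and φ : X → ℝ integrable. Then ∫ φ dm + κ ∫ (φ − ∫ φ dm)₊ dm = sup { ∫ φ · (1 + h − ∫ h dm) dm : h measurable, 0 ≤ h ≤ κ }, and the supremum is attained (for example at h = κ·1_{{φ > ∫ φ dm}}). In particular, every measure μ with dμ/dm = 1 + h − ∫ h dm, 0 ≤ h ≤ κ, is a probability measure, and the mean–semideviation equals the maximum of ∫ φ dμ over this set of probability measures. -/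
/-!
Writing `c = ∫ φ dm`, the mean part of `∫ φ (1 + h - ∫ h dm) dm` cancels and the integral equals
`c + ∫ (φ - c) h dm`. Pointwise `(φ - c) h ≤ κ (φ - c)₊` whenever `0 ≤ h ≤ κ`, with equality for
`h = κ · 1_{φ > c}`; so the supremum is the mean–semideviation and is attained there. Since
`∫ h dm ≤ κ ≤ 1 ≤ 1 + h`, every density `1 + h - ∫ h dm` is nonnegative, and it integrates to `1`.
-/

open MeasureTheory

lemma mul_le_mul_max_zero {a t κ : ℝ} (ht : 0 ≤ t ∧ t ≤ κ) : a * t ≤ κ * max a 0 := by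
  rcases le_total a 0 with ha | ha
  · rw [max_eq_right ha, mul_zero]
    exact mul_nonpos_of_nonpos_of_nonneg ha ht.1
  · rw [max_eq_left ha, mul_comm κ]
    exact mul_le_mul_of_nonneg_left ht.2 ha

lemma mul_ite_pos_eq_mul_max_zero (a κ : ℝ) : a * (if 0 < a then κ else 0) = κ * max a 0 := by
  split_ifs with ha
  · rw [max_eq_left ha.le, mul_comm]
  · rw [max_eq_right (not_lt.mp ha), mul_zero, mul_zero]

section

variable {X : Type*} [MeasurableSpace X] {m : Measure X}

lemma integral_mul_one_add_sub_integral {φ h : X → ℝ} (hφ : Integrable φ m)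
    (hh : Integrable h m) (hφh : Integrable (fun x => φ x * h x) m) :
    ∫ x, φ x * (1 + h x - ∫ y, h y ∂m) ∂m
      = ∫ x, φ x ∂m + ∫ x, (φ x - ∫ y, φ y ∂m) * h x ∂m := by
  have expand_left : ∀ x, φ x * (1 + h x - ∫ y, h y ∂m)
      = φ x + (φ x * h x - (∫ y, h y ∂m) * φ x) := fun x => by ring
  have expand_right : ∀ x, (φ x - ∫ y, φ y ∂m) * h x
      = φ x * h x - (∫ y, φ y ∂m) * h x := fun x => by ring
  simp only [expand_left, expand_right]
  rw [integral_add hφ (by exact hφh.sub (hφ.const_mul _)), integral_sub hφh (hφ.const_mul _),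
    integral_sub hφh (hh.const_mul _), integral_const_mul, integral_const_mul]
  ring

lemma isProbabilityMeasure_withDensity_ofReal {f : X → ℝ} (hf : Integrable f m)
    (hf_nonneg : 0 ≤ᵐ[m] f) (hf_one : ∫ x, f x ∂m = 1) :
    IsProbabilityMeasure (m.withDensity fun x => ENNReal.ofReal (f x)) := by
  constructor
  rw [withDensity_apply _ MeasurableSet.univ, setLIntegral_univ,
    ← ofReal_integral_eq_lintegral_ofReal hf hf_nonneg, hf_one, ENNReal.ofReal_one]

lemma integral_one_add_sub_integral [IsProbabilityMeasure m] {h : X → ℝ}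
    (hh : Integrable h m) : ∫ x, (1 + h x - ∫ y, h y ∂m) ∂m = 1 := by
  rw [integral_sub (by exact (integrable_const 1).add hh) (integrable_const _),
    integral_add (integrable_const 1) hh]
  simp

lemma ae_norm_le_of_bounds {κ : ℝ} {h : X → ℝ} (hb : ∀ x, 0 ≤ h x ∧ h x ≤ κ) :
    ∀ᵐ x ∂m, ‖h x‖ ≤ κ :=
  .of_forall fun x => (Real.norm_of_nonneg (hb x).1).trans_le (hb x).2

variable [IsFiniteMeasure m] {κ : ℝ} {φ h : X → ℝ}

lemma integrable_of_bounds (hh : Measurable h) (hb : ∀ x, 0 ≤ h x ∧ h x ≤ κ) :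
    Integrable h m :=
  .of_bound hh.aestronglyMeasurable κ (ae_norm_le_of_bounds hb)

lemma integral_mul_one_add_sub_integral_of_bounds (hφ : Integrable φ m) (hh : Measurable h)
    (hb : ∀ x, 0 ≤ h x ∧ h x ≤ κ) :
    ∫ x, φ x * (1 + h x - ∫ y, h y ∂m) ∂m
      = ∫ x, φ x ∂m + ∫ x, (φ x - ∫ y, φ y ∂m) * h x ∂m :=
  integral_mul_one_add_sub_integral hφ (integrable_of_bounds hh hb)
    (hφ.mul_bdd hh.aestronglyMeasurable (ae_norm_le_of_bounds hb))

lemma integral_mul_one_add_sub_integral_le (hφ : Integrable φ m) (hh : Measurable h)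
    (hb : ∀ x, 0 ≤ h x ∧ h x ≤ κ) :
    ∫ x, φ x * (1 + h x - ∫ y, h y ∂m) ∂m
      ≤ ∫ x, φ x ∂m + κ * ∫ x, max (φ x - ∫ y, φ y ∂m) 0 ∂m := by
  have hφ_centered : Integrable (fun x => φ x - ∫ y, φ y ∂m) m := hφ.sub (integrable_const _)
  rw [integral_mul_one_add_sub_integral_of_bounds hφ hh hb, ← integral_const_mul]
  exact add_le_add le_rfl (integral_mono
    (hφ_centered.mul_bdd hh.aestronglyMeasurable (ae_norm_le_of_bounds hb))
    (hφ_centered.pos_part.const_mul κ) fun x => mul_le_mul_max_zero (hb x))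

lemma integral_mul_one_add_sub_integral_eq (hφ : Integrable φ m) (hh : Measurable h)
    (hb : ∀ x, 0 ≤ h x ∧ h x ≤ κ)
    (h_eq : ∀ x, (φ x - ∫ y, φ y ∂m) * h x = κ * max (φ x - ∫ y, φ y ∂m) 0) :
    ∫ x, φ x * (1 + h x - ∫ y, h y ∂m) ∂m
      = ∫ x, φ x ∂m + κ * ∫ x, max (φ x - ∫ y, φ y ∂m) 0 ∂m := by
  rw [integral_mul_one_add_sub_integral_of_bounds hφ hh hb, ← integral_const_mul]
  simp only [h_eq]

end

/-- **Dual representation of the first-order mean–semideviation.**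
For a probability space `(X, ℬ, m)`, `κ ∈ [0,1]`, and integrable `φ`, the value
`∫ φ dm + κ ∫ (φ − ∫ φ dm)₊ dm` is the attained supremum of
`∫ φ · (1 + h − ∫ h dm) dm` over measurable `h` with `0 ≤ h ≤ κ`; moreover every density
`1 + h − ∫ h dm` with `0 ≤ h ≤ κ` defines a probability measure. -/
theorem mean_semideviation_dual_representation
    {X : Type*} [MeasurableSpace X] (m : Measure X) [IsProbabilityMeasure m]
    (κ : ℝ) (hκ0 : 0 ≤ κ) (hκ1 : κ ≤ 1)
    (φ : X → ℝ) (hφm : Measurable φ) (hφ : Integrable φ m) :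
    IsGreatest
      {r : ℝ | ∃ h : X → ℝ, Measurable h ∧ (∀ x, 0 ≤ h x ∧ h x ≤ κ) ∧
        r = ∫ x, φ x * (1 + h x - ∫ y, h y ∂m) ∂m}
      (∫ x, φ x ∂m + κ * ∫ x, max (φ x - ∫ y, φ y ∂m) 0 ∂m) ∧
    ∀ h : X → ℝ, Measurable h → (∀ x, 0 ≤ h x ∧ h x ≤ κ) →
      IsProbabilityMeasure
        (m.withDensity fun x => ENNReal.ofReal (1 + h x - ∫ y, h y ∂m)) := by
  set h₀ : X → ℝ := fun x => if 0 < φ x - ∫ y, φ y ∂m then κ else 0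
  have hh₀ : Measurable h₀ :=
    .ite (measurableSet_lt measurable_const (hφm.sub_const _)) measurable_const measurable_const
  have hb₀ : ∀ x, 0 ≤ h₀ x ∧ h₀ x ≤ κ := fun x => by
    dsimp only [h₀]
    split_ifs <;> simp [hκ0]
  refine ⟨⟨⟨h₀, hh₀, hb₀, (integral_mul_one_add_sub_integral_eq hφ hh₀ hb₀
    fun x => mul_ite_pos_eq_mul_max_zero _ κ).symm⟩, ?_⟩, fun h hh hb => ?_⟩
  · rintro r ⟨h, hh, hb, rfl⟩
    exact integral_mul_one_add_sub_integral_le hφ hh hb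
  · have hint : Integrable h m := integrable_of_bounds hh hb
    have hmean_le : ∫ y, h y ∂m ≤ κ :=
      (integral_mono hint (integrable_const κ) fun x => (hb x).2).trans_eq (by simp)
    refine isProbabilityMeasure_withDensity_ofReal
      (((integrable_const 1).add hint).sub (integrable_const _)) (.of_forall fun x => ?_)
      (integral_one_add_sub_integral hint)
    simp only [Pi.zero_apply]
    linarith [(hb x).1]
end

section
/- Dual representation of the Average Value at Risk: let (X, ℬ, m) be a probability space, α ∈ (0,1), and φ : X → ℝ integrable. Then inf_{η ∈ ℝ} { η + (1/α) ∫ (φ − η)₊ dm } = sup { ∫ φ g dm : g measurable, 0 ≤ g ≤ 1/α, ∫ g dm = 1 }, and the supremum is attained. In particular, the Average Value at Risk equals the maximum of ∫ φ dμ over all probability measures μ absolutely continuous with respect to m whose density satisfies dμ/dm ≤ 1/α. -/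
/-!
Weak duality is pointwise: if `0 ≤ g ≤ 1/α` and `∫ g = 1`, then
`φ g = η g + (φ - η) g ≤ η g + (1/α) (φ - η)₊`, and integrating gives
`∫ φ g ≤ η + (1/α) ∫ (φ - η)₊` for every `η`. Equality holds as soon as `g = 1/α` on `{φ > η}`
and `g = 0` on `{φ < η}`. At an upper `α`-quantile `t` of `φ`, i.e. `m {φ > t} ≤ α ≤ m {φ ≥ t}`,
such a `g` with `∫ g = 1` exists: the missing mass `α - m {φ > t}` is spread evenly over the atom
`{φ = t}`. So the infimum is attained at `t`, and there it equals `∫ φ g`.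
-/

open MeasureTheory Filter Topology Set ProbabilityTheory

theorem StieltjesFunction.exists_leftLim_le_le (f : StieltjesFunction ℝ) {l₀ l₁ c : ℝ}
    (h₀ : Tendsto f atBot (𝓝 l₀)) (h₁ : Tendsto f atTop (𝓝 l₁)) (hc₀ : l₀ < c) (hc₁ : c < l₁) :
    ∃ t, Function.leftLim f t ≤ c ∧ c ≤ f t := by
  set S := {s | c ≤ f s}
  have hne : S.Nonempty := (h₁.eventually_const_le hc₁).exists
  obtain ⟨s₀, hs₀⟩ := eventually_atBot.1 (h₀.eventually_lt_const hc₀)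
  have hbdd : BddBelow S := ⟨s₀, fun s hs => le_of_not_gt fun hlt => (hs₀ s hlt.le).not_ge hs⟩
  refine ⟨sInf S, ?_, ?_⟩
  · refine le_of_tendsto (f.mono.tendsto_leftLim _) (eventually_nhdsWithin_of_forall fun s hs => ?_)
    exact (not_le.1 fun h => (csInf_le hbdd h).not_gt hs).le
  · refine ge_of_tendsto ((f.right_continuous _).mono Ioi_subset_Ici_self)
      (eventually_nhdsWithin_of_forall fun s hs => ?_)
    obtain ⟨s', hs'S, hs's⟩ := exists_lt_of_csInf_lt hne hs
    exact hs'S.trans (f.mono hs's.le)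

theorem exists_measureReal_Ioi_le_le (μ : Measure ℝ) [IsProbabilityMeasure μ] {a : ℝ}
    (ha₀ : 0 < a) (ha₁ : a < 1) : ∃ t, μ.real (Ioi t) ≤ a ∧ a ≤ μ.real (Ioi t) + μ.real {t} := by
  obtain ⟨t, hleft, hright⟩ := (cdf μ).exists_leftLim_le_le (tendsto_cdf_atBot μ)
    (tendsto_cdf_atTop μ) (sub_pos.2 ha₁) (sub_lt_self 1 ha₀)
  have hIoi : μ.real (Ioi t) = 1 - cdf μ t := by
    rw [cdf_eq_real, ← compl_Iic, probReal_compl_eq_one_sub measurableSet_Iic]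
  have hatom : μ.real {t} = cdf μ t - Function.leftLim (cdf μ) t := by
    have := (cdf μ).measure_singleton t
    rw [measure_cdf] at this
    rw [measureReal_def, this, ENNReal.toReal_ofReal (sub_nonneg.2 ((cdf μ).mono.leftLim_le le_rfl))]
  exact ⟨t, by linarith, by linarith⟩

theorem exists_mem_Icc_add_mul_eq {p q a : ℝ} (hp : p ≤ a) (hq : a ≤ p + q) :
    ∃ θ ∈ Icc (0 : ℝ) 1, p + θ * q = a := by
  have hcont : ContinuousOn (fun θ : ℝ => p + θ * q) (Icc 0 1) := by fun_prop
  simpa using intermediate_value_Icc zero_le_one hcont ⟨by simpa using hp, by simpa using hq⟩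

theorem mul_le_mul_max_zero_s14 {a g C : ℝ} (hg₀ : 0 ≤ g) (hgC : g ≤ C) : a * g ≤ C * max a 0 := by
  rcases le_total 0 a with ha | ha
  · rw [max_eq_left ha, mul_comm C]
    exact mul_le_mul_of_nonneg_left hgC ha
  · rw [max_eq_right ha, mul_zero]
    exact mul_nonpos_of_nonpos_of_nonneg ha hg₀

theorem isGreatest_iInf_of_forall_le {ι α : Type*} [ConditionallyCompleteLattice α] {S : Set α}
    {f : ι → α} {i : ι} (hS : ∀ s ∈ S, ∀ j, s ≤ f j) (hi : f i ∈ S) : IsGreatest S (⨅ j, f j) := by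
  have hleast : IsLeast (range f) (f i) := ⟨mem_range_self i, forall_mem_range.2 (hS _ hi)⟩
  have : Nonempty ι := ⟨i⟩
  rw [hleast.isGLB.ciInf_eq]
  exact ⟨hi, fun s hs => hS s hs i⟩

section Density

variable {X : Type*} [MeasurableSpace X] {m : Measure X} {φ g : X → ℝ} {C : ℝ}

theorem MeasureTheory.Integrable.mul_of_bounds (hφ : Integrable φ m) (hgm : Measurable g)
    (hg : ∀ x, 0 ≤ g x ∧ g x ≤ C) : Integrable (fun x => φ x * g x) m :=
  hφ.mul_bdd hgm.aestronglyMeasurable <| ae_of_all _ fun x => by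
    rw [Real.norm_eq_abs, abs_of_nonneg (hg x).1]
    exact (hg x).2

variable [IsFiniteMeasure m]

theorem integral_mul_eq_add_integral_sub_mul (hφ : Integrable φ m) (hgm : Measurable g)
    (hg : ∀ x, 0 ≤ g x ∧ g x ≤ C) (hg₁ : ∫ x, g x ∂m = 1) (η : ℝ) :
    ∫ x, φ x * g x ∂m = η + ∫ x, (φ x - η) * g x ∂m := by
  have hg_int : Integrable g m := by
    simpa using (integrable_const (1 : ℝ)).mul_of_bounds hgm hg
  simp_rw [sub_mul]
  rw [integral_sub (hφ.mul_of_bounds hgm hg) (hg_int.const_mul η), integral_const_mul, hg₁]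
  ring

theorem integral_mul_le_add_mul_integral_max_sub (hφ : Integrable φ m) (hgm : Measurable g)
    (hg : ∀ x, 0 ≤ g x ∧ g x ≤ C) (hg₁ : ∫ x, g x ∂m = 1) (η : ℝ) :
    ∫ x, φ x * g x ∂m ≤ η + C * ∫ x, max (φ x - η) 0 ∂m := by
  rw [integral_mul_eq_add_integral_sub_mul hφ hgm hg hg₁ η, ← integral_const_mul]
  have hφη : Integrable (fun x => φ x - η) m := hφ.sub (integrable_const η)
  exact add_le_add_right (integral_mono (hφη.mul_of_bounds hgm hg) (hφη.pos_part.const_mul C)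
    fun x => mul_le_mul_max_zero_s14 (hg x).1 (hg x).2) η

theorem integral_mul_eq_add_mul_integral_max_sub (hφ : Integrable φ m) (hgm : Measurable g)
    (hg : ∀ x, 0 ≤ g x ∧ g x ≤ C) (hg₁ : ∫ x, g x ∂m = 1) {η : ℝ}
    (hslack : ∀ x, (φ x - η) * g x = C * max (φ x - η) 0) :
    ∫ x, φ x * g x ∂m = η + C * ∫ x, max (φ x - η) 0 ∂m := by
  rw [integral_mul_eq_add_integral_sub_mul hφ hgm hg hg₁ η]
  simp_rw [hslack, integral_const_mul]

theorem exists_density_mul_sub_eq_max_sub {α t : ℝ} (hα : 0 < α) (hφm : Measurable φ)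
    (hp : m.real {x | t < φ x} ≤ α) (hpq : α ≤ m.real {x | t < φ x} + m.real {x | φ x = t}) :
    ∃ g : X → ℝ, Measurable g ∧ (∀ x, 0 ≤ g x ∧ g x ≤ 1 / α) ∧ ∫ x, g x ∂m = 1 ∧
      ∀ x, (φ x - t) * g x = 1 / α * max (φ x - t) 0 := by
  obtain ⟨θ, ⟨hθ₀, hθ₁⟩, hθ⟩ := exists_mem_Icc_add_mul_eq hp hpq
  set A := {x | t < φ x}
  set E := {x | φ x = t}
  have hA : MeasurableSet A := measurableSet_lt measurable_const hφm
  have hE : MeasurableSet E := hφm (measurableSet_singleton t)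
  refine ⟨fun x => A.indicator (fun _ => 1 / α) x + E.indicator (fun _ => θ / α) x,
    (measurable_const.indicator hA).add (measurable_const.indicator hE), fun x => ?_, ?_,
    fun x => ?_⟩
  · rcases lt_trichotomy (φ x) t with hlt | heq | hgt
    · simp [A, E, hlt.not_gt, hlt.ne, hα.le]
    · have hθα : θ / α ≤ α⁻¹ := by simpa using div_le_div_of_nonneg_right hθ₁ hα.le
      simpa [A, E, heq] using And.intro (div_nonneg hθ₀ hα.le) hθα
    · simp [A, E, hgt, hgt.ne', hα.le]
  · rw [integral_add ((integrable_const _).indicator hA) ((integrable_const _).indicator hE),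
      integral_indicator_const _ hA, integral_indicator_const _ hE, smul_eq_mul, smul_eq_mul]
    field_simp
    linarith
  · rcases lt_trichotomy (φ x) t with hlt | heq | hgt
    · simp [A, E, hlt.not_gt, hlt.ne, hlt.le]
    · simp [A, E, heq]
    · simp [A, E, hgt, hgt.ne', hgt.le, mul_comm]

end Density

/-- **Dual representation of the Average Value at Risk.**
For a probability space `(X, ℬ, m)`, `α ∈ (0,1)`, and integrable `φ`, the value
`inf_{η} { η + (1/α) ∫ (φ − η)₊ dm }` is the attained supremum of `∫ φ g dm` over
measurable densities `g` with `0 ≤ g ≤ 1/α` and `∫ g dm = 1`; i.e. it is the maximum of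
`∫ φ dμ` over probability measures `μ ≪ m` with `dμ/dm ≤ 1/α`. -/
theorem avar_dual_representation
    {X : Type*} [MeasurableSpace X] (m : Measure X) [IsProbabilityMeasure m]
    (α : ℝ) (hα0 : 0 < α) (hα1 : α < 1)
    (φ : X → ℝ) (hφm : Measurable φ) (hφ : Integrable φ m) :
    IsGreatest
      {r : ℝ | ∃ g : X → ℝ, Measurable g ∧ (∀ x, 0 ≤ g x ∧ g x ≤ 1 / α) ∧
        (∫ x, g x ∂m) = 1 ∧ r = ∫ x, φ x * g x ∂m}
      (⨅ η : ℝ, (η + (1 / α) * ∫ x, max (φ x - η) 0 ∂m)) := by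
  have := Measure.isProbabilityMeasure_map (μ := m) hφm.aemeasurable
  obtain ⟨t, hp, hpq⟩ := exists_measureReal_Ioi_le_le (m.map φ) hα0 hα1
  simp only [map_measureReal_apply hφm measurableSet_Ioi,
    map_measureReal_apply hφm (measurableSet_singleton t)] at hp hpq
  obtain ⟨g, hgm, hg, hg₁, hslack⟩ := exists_density_mul_sub_eq_max_sub hα0 hφm hp hpq
  refine isGreatest_iInf_of_forall_le (i := t) ?_
    ⟨g, hgm, hg, hg₁, (integral_mul_eq_add_mul_integral_max_sub hφ hgm hg hg₁ hslack).symm⟩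
  rintro r ⟨g, hgm, hg, hg₁, rfl⟩ η
  exact integral_mul_le_add_mul_integral_max_sub hφ hgm hg hg₁ η
end

section
/- Lower semicontinuity of the mean–semideviation dual set: let (X, ℬ, P₀) be a probability space, p ∈ [1,∞), and let m and m_k (k = 1, 2, …) be probability measures on X, absolutely continuous with respect to P₀ with densities in L^q(P₀), such that m_k → m in the weak* sense, i.e., ∫ v dm_k → ∫ v dm for every v ∈ L^p(P₀). Let h be a measurable function with 0 ≤ h ≤ κ for some κ ∈ [0,1], and define the probability measures μ and μ_k by the densities dμ/dm = 1 + h − ∫ h dm and dμ_k/dm_k = 1 + h − ∫ h dm_k. Then for every v ∈ L^p(P₀), lim_{k→∞} ∫ v dμ_k = ∫ v dμ; i.e., μ_k → μ in the weak* sense. In particular, every element of the mean–semideviation dual set A(m) = { μ : dμ/dm = 1 + h − ∫ h dm, 0 ≤ h ≤ κ } is the weak* limit of elements μ_k ∈ A(m_k), so the multifunction m ↦ A(m) is lower semicontinuous. -/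
open MeasureTheory Filter Topology
open scoped ENNReal

/-!
Since `1 + h - ∫ h dν ≥ 0`, the density needs no truncation, and integrating `v` against it
gives `∫ v dν + ∫ h v dν - (∫ h dν) (∫ v dν)`. Each of `v`, `h v`, `h` lies in `L^p(P₀)`
(as `h` is bounded), so each of the three integrals converges along `m_k → m`, and so does
their bilinear combination. The densities being in `L^q(P₀)` is what makes `L^p(P₀)`
functions integrable against `m` and `m_k`, by Hölder.
-/

section

variable {X : Type*} [MeasurableSpace X]

theorem MeasureTheory.MemLp.integrable_of_rnDeriv_memLp {ν P₀ : Measure X} [SigmaFinite ν]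
    [IsFiniteMeasure P₀] {p q : ℝ≥0∞} [p.HolderConjugate q] {w : X → ℝ} (hw : MemLp w p P₀)
    (hν : ν ≪ P₀) (hdens : MemLp (fun x => (ν.rnDeriv P₀ x).toReal) q P₀) :
    Integrable w ν :=
  (integrable_rnDeriv_smul_iff hν).1 <| (hw.smul hdens).integrable le_rfl

theorem integral_withDensity_one_add_sub_integral {ν : Measure X} [IsProbabilityMeasure ν]
    {h v : X → ℝ} (hhm : Measurable h) (h0 : ∀ x, 0 ≤ h x) (h1 : ∀ x, h x ≤ 1)
    (hv : Integrable v ν) :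
    ∫ x, v x ∂(ν.withDensity fun x => ENNReal.ofReal (1 + h x - ∫ y, h y ∂ν)) =
      ∫ x, v x ∂ν + ∫ x, h x * v x ∂ν - (∫ y, h y ∂ν) * ∫ x, v x ∂ν := by
  set c := ∫ y, h y ∂ν
  have hc : c ≤ 1 :=
    (integral_mono_of_nonneg (ae_of_all _ h0) (integrable_const 1) (ae_of_all _ h1)).trans_eq
      (by simp)
  have hhv : Integrable (fun x => h x * v x) ν :=
    hv.bdd_mul hhm.aestronglyMeasurable (c := 1) (ae_of_all _ fun x => (Real.norm_of_nonneg (h0 x)).trans_le (h1 x))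
  rw [integral_withDensity_eq_integral_toReal_smul (by fun_prop)
    (ae_of_all _ fun _ => ENNReal.ofReal_lt_top)]
  calc ∫ x, (ENNReal.ofReal (1 + h x - c)).toReal • v x ∂ν
      = ∫ x, (v x + h x * v x) - c * v x ∂ν := by
        refine integral_congr_ae (ae_of_all _ fun x => ?_)
        simp only [smul_eq_mul]
        rw [ENNReal.toReal_ofReal (by linarith [h0 x])]
        ring
    _ = _ := by
        rw [integral_sub (f := fun x => v x + h x * v x) (hv.add hhv) (hv.const_mul c),
          integral_add hv hhv, integral_const_mul]

end

theorem mean_semideviation_dual_set_lsc_general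
    {X : Type*} [MeasurableSpace X] (P₀ : Measure X) [IsProbabilityMeasure P₀]
    (p q : ℝ≥0∞) (hpq : 1 / p + 1 / q = 1)
    (m : Measure X) (ms : ℕ → Measure X)
    [IsProbabilityMeasure m] (hms : ∀ k, IsProbabilityMeasure (ms k))
    (hac : m ≪ P₀) (hacs : ∀ k, ms k ≪ P₀)
    (hd : MemLp (fun x => (m.rnDeriv P₀ x).toReal) q P₀)
    (hds : ∀ k, MemLp (fun x => ((ms k).rnDeriv P₀ x).toReal) q P₀)
    (hconv : ∀ v : X → ℝ, MemLp v p P₀ →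
      Tendsto (fun k => ∫ x, v x ∂(ms k)) atTop (𝓝 (∫ x, v x ∂m)))
    (κ : ℝ) (hκ1 : κ ≤ 1)
    (h : X → ℝ) (hhm : Measurable h) (hh : ∀ x, 0 ≤ h x ∧ h x ≤ κ) :
    ∀ v : X → ℝ, MemLp v p P₀ →
      Tendsto
        (fun k => ∫ x, v x ∂((ms k).withDensity
          fun x => ENNReal.ofReal (1 + h x - ∫ y, h y ∂(ms k)))) atTop
        (𝓝 (∫ x, v x ∂(m.withDensity
          fun x => ENNReal.ofReal (1 + h x - ∫ y, h y ∂m)))) := by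
  intro v hv
  have : p.HolderConjugate q := ENNReal.holderConjugate_iff.2 (by simpa [one_div] using hpq)
  have hh0 : ∀ x, 0 ≤ h x := fun x => (hh x).1
  have hh1 : ∀ x, h x ≤ 1 := fun x => (hh x).2.trans hκ1
  have hhLinfty : MemLp h ∞ P₀ := memLp_top_of_bound hhm.aestronglyMeasurable 1
    (ae_of_all _ fun x => (Real.norm_of_nonneg (hh0 x)).trans_le (hh1 x))
  have hintegral_density : ∀ ν : Measure X, IsProbabilityMeasure ν → ν ≪ P₀ →
      MemLp (fun x => (ν.rnDeriv P₀ x).toReal) q P₀ →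
      ∫ x, v x ∂(ν.withDensity fun x => ENNReal.ofReal (1 + h x - ∫ y, h y ∂ν)) =
        ∫ x, v x ∂ν + ∫ x, h x * v x ∂ν - (∫ y, h y ∂ν) * ∫ x, v x ∂ν :=
    fun ν _ hν hνd => integral_withDensity_one_add_sub_integral hhm hh0 hh1
      (hv.integrable_of_rnDeriv_memLp hν hνd)
  rw [hintegral_density m inferInstance hac hd]
  refine Tendsto.congr (fun k => (hintegral_density (ms k) (hms k) (hacs k) (hds k)).symm) ?_
  exact ((hconv v hv).add (hconv _ (hv.mul hhLinfty))).sub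
    ((hconv h (hhLinfty.mono_exponent le_top)).mul (hconv v hv))

/-- **Lower semicontinuity of the mean–semideviation dual set.**
Let `P₀` be a reference probability measure, `p ∈ [1,∞)` with conjugate `q`, and let
`m_k → m` weak* (tested against all `v ∈ L^p(P₀)`), where `m` and all `m_k` are probability
measures absolutely continuous with respect to `P₀` with densities in `L^q(P₀)`. If
`0 ≤ h ≤ κ ≤ 1` is measurable and `μ`, `μ_k` are defined by the densities
`dμ/dm = 1 + h − ∫ h dm` and `dμ_k/dm_k = 1 + h − ∫ h dm_k`, then `μ_k → μ` weak*:
`∫ v dμ_k → ∫ v dμ` for every `v ∈ L^p(P₀)`. Hence the mean–semideviation dual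
multifunction `m ↦ A(m)` is lower semicontinuous. -/
theorem mean_semideviation_dual_set_lsc
    {X : Type*} [MeasurableSpace X] (P₀ : Measure X) [IsProbabilityMeasure P₀]
    (p q : ℝ≥0∞) (hp : 1 ≤ p) (hptop : p ≠ ⊤) (hpq : 1 / p + 1 / q = 1)
    (m : Measure X) (ms : ℕ → Measure X)
    [IsProbabilityMeasure m] (hms : ∀ k, IsProbabilityMeasure (ms k))
    (hac : m ≪ P₀) (hacs : ∀ k, ms k ≪ P₀)
    (hd : MemLp (fun x => (m.rnDeriv P₀ x).toReal) q P₀)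
    (hds : ∀ k, MemLp (fun x => ((ms k).rnDeriv P₀ x).toReal) q P₀)
    (hconv : ∀ v : X → ℝ, MemLp v p P₀ →
      Tendsto (fun k => ∫ x, v x ∂(ms k)) atTop (𝓝 (∫ x, v x ∂m)))
    (κ : ℝ) (hκ0 : 0 ≤ κ) (hκ1 : κ ≤ 1)
    (h : X → ℝ) (hhm : Measurable h) (hh : ∀ x, 0 ≤ h x ∧ h x ≤ κ) :
    ∀ v : X → ℝ, MemLp v p P₀ →
      Tendsto
        (fun k => ∫ x, v x ∂((ms k).withDensity
          fun x => ENNReal.ofReal (1 + h x - ∫ y, h y ∂(ms k)))) atTop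
        (𝓝 (∫ x, v x ∂(m.withDensity
          fun x => ENNReal.ofReal (1 + h x - ∫ y, h y ∂m)))) :=
  mean_semideviation_dual_set_lsc_general P₀ p q hpq m ms hms hac hacs hd hds hconv κ hκ1 h hhm hh
end

section
/- Risk-averse evaluation of the two-state transient chain under Average Value at Risk: (i) for every J ≥ 0 and α ∈ (0,1), inf_{η ∈ ℝ} { η + (1/(2α)) [ (J − η)₊ + (−η)₊ ] } = min(1, 1/(2α)) · J; (ii) consequently, the sequence defined by J₀ = 0 and J_{k+1} = 1 + min(1, 1/(2α)) · J_k satisfies: if 1/2 < α < 1, then J_k converges to 2α/(2α − 1); if 0 < α ≤ 1/2, then J_k → ∞. In particular, the nested (compositional) Average Value at Risk of the total cost of the chain is finite and equal to 2α/(2α−1) when α > 1/2, and it has no finite limit when 0 < α ≤ 1/2. -/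
open Filter Topology Finset

/-!
With `c = 1/(2α) ≥ 1/2`, the objective `η + c((J - η)₊ + (-η)₊)` is piecewise linear in `η`
with slope `1 - 2c ≤ 0` on `η < 0`, `1 - c` on `[0, J]` and `1` on `η > J`, so its infimum is
attained at `η = 0` (value `cJ`) when `c ≤ 1` and at `η = J` (value `J`) otherwise.
The recursion `J_{k+1} = 1 + a J_k`, `J_0 = 0` then produces the partial geometric sums
`∑_{i<k} aⁱ` of `a = min(1, 1/(2α))`, which converge to `(1 - a)⁻¹ = 2α/(2α - 1)` when `a < 1`
and equal `k` when `a = 1`.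
-/

section AVaR

variable {c J : ℝ}

theorem min_one_mul_le_add_mul_posPart (hc : 1 / 2 ≤ c) (hJ : 0 ≤ J) (η : ℝ) :
    min 1 c * J ≤ η + c * (max (J - η) 0 + max (-η) 0) := by
  have hm1 : min 1 c ≤ 1 := min_le_left _ _
  have hmc : min 1 c ≤ c := min_le_right _ _
  have hm0 : 0 ≤ min 1 c := le_min zero_le_one (by linarith)
  rcases le_or_gt 0 η with hη | hη
  · rw [max_eq_right (by linarith : -η ≤ 0), add_zero]
    calc min 1 c * J = min 1 c * η + min 1 c * (J - η) := by ring
      _ ≤ η + c * max (J - η) 0 := by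
        gcongr ?_ + ?_
        · exact mul_le_of_le_one_left hη hm1
        · exact (mul_le_mul_of_nonneg_left (le_max_left _ _) hm0).trans
            (mul_le_mul_of_nonneg_right hmc (le_max_right _ _))
  · rw [max_eq_left (by linarith : 0 ≤ J - η), max_eq_left (by linarith : 0 ≤ -η)]
    nlinarith [mul_nonneg (sub_nonneg.2 hmc) hJ]

theorem exists_add_mul_posPart_eq_min_one_mul (hJ : 0 ≤ J) :
    ∃ η : ℝ, η + c * (max (J - η) 0 + max (-η) 0) = min 1 c * J := by
  rcases le_total c 1 with hc | hc
  · exact ⟨0, by simp [max_eq_left hJ, min_eq_right hc]⟩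
  · exact ⟨J, by simp [max_eq_right (neg_nonpos.2 hJ), min_eq_left hc]⟩

theorem iInf_add_mul_posPart_eq_min_one_mul (hc : 1 / 2 ≤ c) (hJ : 0 ≤ J) :
    ⨅ η : ℝ, (η + c * (max (J - η) 0 + max (-η) 0)) = min 1 c * J := by
  refine IsGLB.ciInf_eq (IsLeast.isGLB ⟨?_, ?_⟩)
  · exact exists_add_mul_posPart_eq_min_one_mul hJ
  · rintro _ ⟨η, rfl⟩
    exact min_one_mul_le_add_mul_posPart hc hJ η

end AVaR

theorem eq_geom_sum_of_succ_eq_one_add_mul {R : Type*} [Semiring R] {a : R} {x : ℕ → R}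
    (h0 : x 0 = 0) (hrec : ∀ k, x (k + 1) = 1 + a * x k) :
    ∀ k, x k = ∑ i ∈ range k, a ^ i
  | 0 => h0
  | k + 1 => by rw [hrec, geom_sum_succ, eq_geom_sum_of_succ_eq_one_add_mul h0 hrec k, add_comm]

/-- **Risk-averse evaluation of the two-state transient chain under Average Value at Risk.**
(i) For every `J ≥ 0` and `α ∈ (0,1)`,
`inf_{η ∈ ℝ} { η + (1/(2α))[(J − η)₊ + (−η)₊] } = min(1, 1/(2α)) · J`.
(ii) Consequently, the nested AVaR values `J₀ = 0`, `J_{k+1} = 1 + min(1, 1/(2α)) · J_k`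
converge to `2α/(2α − 1)` when `1/2 < α < 1`, and diverge to `∞` when `0 < α ≤ 1/2`. -/
theorem avar_two_state_chain
    (α : ℝ) (hα0 : 0 < α) (hα1 : α < 1) :
    (∀ J : ℝ, 0 ≤ J →
      (⨅ η : ℝ, (η + (1 / (2 * α)) * (max (J - η) 0 + max (-η) 0)))
        = min 1 (1 / (2 * α)) * J) ∧
    (∀ Jseq : ℕ → ℝ, Jseq 0 = 0 →
      (∀ k, Jseq (k + 1) = 1 + min 1 (1 / (2 * α)) * Jseq k) →
      ((1 / 2 < α → Tendsto Jseq atTop (𝓝 (2 * α / (2 * α - 1)))) ∧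
       (α ≤ 1 / 2 → Tendsto Jseq atTop atTop))) := by
  have hc : 1 / 2 ≤ 1 / (2 * α) := one_div_le_one_div_of_le (by positivity) (by linarith)
  refine ⟨fun J hJ => iInf_add_mul_posPart_eq_min_one_mul hc hJ, fun Jseq h0 hrec => ⟨?_, ?_⟩⟩
  · intro hα
    have hc1 : 1 / (2 * α) < 1 := by rw [div_lt_one (by positivity)]; linarith
    rw [min_eq_right hc1.le] at hrec
    have hlim : (1 - 1 / (2 * α))⁻¹ = 2 * α / (2 * α - 1) := by field_simp
    rw [funext (eq_geom_sum_of_succ_eq_one_add_mul h0 hrec), ← hlim]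
    exact (hasSum_geometric_of_lt_one (by positivity) hc1).tendsto_sum_nat
  · intro hα
    have hc1 : 1 ≤ 1 / (2 * α) := by rw [le_div_iff₀ (by positivity)]; linarith
    rw [min_eq_left hc1] at hrec
    simp only [funext (eq_geom_sum_of_succ_eq_one_add_mul h0 hrec), one_pow, sum_const, card_range,
      nsmul_eq_mul, mul_one]
    exact tendsto_natCast_atTop_atTop
end

section
/- Solution of the risk-averse asset selling problem: let 𝒜 be a nonempty set of probability measures on ℕ, each with finite first moment, let c₀ > 0 be the waiting cost, and suppose x* ∈ ℕ satisfies inf_{μ ∈ 𝒜} Σ_{s=0}^∞ (s − x*)₊ μ({s}) = c₀. Define v(x) = −max(x, x*) for x ∈ ℕ. Then v satisfies the risk-averse dynamic programming equation of the asset selling problem: for every x ∈ ℕ, v(x) = min{ −x, c₀ + sup_{μ ∈ 𝒜} Σ_{s=0}^∞ v(max(x, s)) μ({s}) }. Consequently, the policy 'accept the first offer greater than or equal to x*, and wait otherwise' is optimal, and the optimal value function is v*(x) = −max(x, x*). -/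
open MeasureTheory Filter Topology

private lemma ciSup_const_sub' {ι : Sort*} [Nonempty ι] (c : ℝ) (f : ι → ℝ)
    (hb : BddBelow (Set.range f)) : (⨆ i, c - f i) = c - ⨅ i, f i := by
  have hub : ∀ i, c - f i ≤ c - ⨅ i, f i := fun i => by
    have := ciInf_le hb i; linarith
  have hba : BddAbove (Set.range fun i => c - f i) :=
    ⟨c - ⨅ i, f i, by rintro _ ⟨i, rfl⟩; exact hub i⟩
  refine le_antisymm (ciSup_le hub) ?_
  have h2 : (c - ⨆ i, c - f i) ≤ ⨅ i, f i := le_ciInf fun i => by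
    have := le_ciSup hba i; linarith
  linarith

private lemma prob_facts (μ : Measure ℕ) (hp : IsProbabilityMeasure μ)
    (hi : Integrable (fun s : ℕ => (s : ℝ)) μ) :
    (∑' s : ℕ, (μ {s}).toReal = 1) ∧ Summable (fun s : ℕ => (μ {s}).toReal) ∧
      Summable (fun s : ℕ => (s : ℝ) * (μ {s}).toReal) := by
  have huniv : (∑' s : ℕ, μ {s}) = 1 := by
    have := lintegral_countable' (μ := μ) (fun _ : ℕ => (1 : ENNReal))
    simpa using this.symm
  have hne : (∑' s : ℕ, μ {s}) ≠ ⊤ := by simp [huniv]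
  refine ⟨?_, ENNReal.summable_toReal hne, ?_⟩
  · rw [← ENNReal.tsum_toReal_eq (fun s => measure_ne_top μ _), huniv]; simp
  · have hfi := hi.hasFiniteIntegral
    rw [HasFiniteIntegral, lintegral_countable'] at hfi
    have := ENNReal.summable_toReal hfi.ne
    refine this.congr fun s => ?_
    rw [ENNReal.toReal_mul]
    congr 1
    simp [Real.enorm_eq_ofReal (by positivity : (0:ℝ) ≤ (s:ℝ))]

/-- **Solution of the risk-averse asset selling problem.**
Let `𝒜` be a nonempty set of probability measures on `ℕ`, each with finite first moment,
let `c₀ > 0` be the waiting cost, and let `x* ∈ ℕ` satisfy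
`inf_{μ ∈ 𝒜} Σ_s (s − x*)₊ μ({s}) = c₀`. Then `v(x) = −max(x, x*)` satisfies the
risk-averse dynamic programming equation
`v(x) = min{ −x, c₀ + sup_{μ ∈ 𝒜} Σ_s v(max(x,s)) μ({s}) }` for every `x ∈ ℕ`;
thus accepting the first offer `≥ x*` is optimal with optimal value `−max(x, x*)`. -/
theorem asset_selling_dp_solution
    (𝒜 : Set (Measure ℕ)) (h𝒜ne : 𝒜.Nonempty)
    (h𝒜 : ∀ μ ∈ 𝒜, IsProbabilityMeasure μ ∧ Integrable (fun s : ℕ => (s : ℝ)) μ)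
    (c₀ : ℝ) (hc₀ : 0 < c₀) (xstar : ℕ)
    (hx : (⨅ μ : 𝒜, ∑' s : ℕ, max ((s : ℝ) - (xstar : ℝ)) 0 * (μ.1 {s}).toReal) = c₀) :
    let v : ℕ → ℝ := fun x => -((max x xstar : ℕ) : ℝ)
    ∀ x : ℕ,
      v x = min (-(x : ℝ))
        (c₀ + ⨆ μ : 𝒜, ∑' s : ℕ, v (max x s) * (μ.1 {s}).toReal) := by
  intro v x
  haveI : Nonempty 𝒜 := h𝒜ne.to_subtype
  set y : ℕ := max x xstar with hy
  -- summability of the positive-part sums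
  have key : ∀ μ : 𝒜, ∀ z : ℕ,
      Summable (fun s : ℕ => max ((s:ℝ) - z) 0 * (μ.1 {s}).toReal) := by
    intro μ z
    obtain ⟨hp, hi⟩ := h𝒜 μ.1 μ.2
    obtain ⟨-, -, hS⟩ := prob_facts μ.1 hp hi
    refine hS.of_nonneg_of_le (fun s => by positivity) (fun s => ?_)
    have h1 : max ((s:ℝ) - z) 0 ≤ (s:ℝ) :=
      max_le (by linarith [Nat.cast_nonneg (α := ℝ) z]) (Nat.cast_nonneg s)
    exact mul_le_mul_of_nonneg_right h1 ENNReal.toReal_nonneg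
  set g : ℕ → 𝒜 → ℝ := fun z μ => ∑' s : ℕ, max ((s:ℝ) - z) 0 * (μ.1 {s}).toReal
    with hg
  have hgnn : ∀ z (μ : 𝒜), 0 ≤ g z μ := fun z μ =>
    tsum_nonneg fun s => by positivity
  have hgbdd : ∀ z : ℕ, BddBelow (Set.range (g z)) :=
    fun z => ⟨0, by rintro _ ⟨μ, rfl⟩; exact hgnn z μ⟩
  -- the value of the waiting sum
  have htsum : ∀ μ : 𝒜,
      (∑' s : ℕ, v (max x s) * (μ.1 {s}).toReal) = -(y:ℝ) - g y μ := by
    intro μ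
    obtain ⟨hp, hi⟩ := h𝒜 μ.1 μ.2
    obtain ⟨h1, hsp, hS⟩ := prob_facts μ.1 hp hi
    have hterm : ∀ s : ℕ, v (max x s) * (μ.1 {s}).toReal
        = (-(y:ℝ)) * (μ.1 {s}).toReal - max ((s:ℝ) - y) 0 * (μ.1 {s}).toReal := by
      intro s
      have h2 : ((max (max x s) xstar : ℕ) : ℝ) = (y:ℝ) + max ((s:ℝ) - y) 0 := by
        rw [sup_right_comm, ← hy]
        push_cast [Nat.cast_max]
        rcases le_total ((s:ℝ)) ((y:ℝ)) with h | h
        · rw [max_eq_left h, max_eq_right (by linarith)]; ring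
        · rw [max_eq_right h, max_eq_left (by linarith)]; ring
      show -((max (max x s) xstar : ℕ) : ℝ) * (μ.1 {s}).toReal = _
      rw [h2]; ring
    rw [tsum_congr hterm,
      Summable.tsum_sub (hsp.mul_left _) (key μ y), tsum_mul_left, h1]
    ring
  rw [iSup_congr htsum, ciSup_const_sub' (-(y:ℝ)) (g y) (hgbdd y)]
  have hxI : (⨅ μ : 𝒜, g xstar μ) = c₀ := hx
  have hmono : ∀ z z' : ℕ, z ≤ z' → (⨅ μ : 𝒜, g z' μ) ≤ ⨅ μ : 𝒜, g z μ := by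
    intro z z' hzz
    refine ciInf_mono (hgbdd z') fun μ => ?_
    refine Summable.tsum_le_tsum (fun s => ?_) (key μ z') (key μ z)
    exact mul_le_mul_of_nonneg_right
      (max_le_max (sub_le_sub_left (by exact_mod_cast hzz) _) le_rfl)
      ENNReal.toReal_nonneg
  show -((y:ℕ):ℝ) = min (-(x:ℝ)) (c₀ + (-(y:ℝ) - ⨅ μ : 𝒜, g y μ))
  rcases le_total x xstar with h | h
  · have hyx : y = xstar := max_eq_right h
    rw [hyx, hxI]
    have : ((x:ℝ)) ≤ (xstar:ℝ) := Nat.cast_le.mpr h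
    rw [min_eq_right (by linarith)]; ring
  · have hyx : y = x := max_eq_left h
    have hle : (⨅ μ : 𝒜, g y μ) ≤ c₀ := hxI ▸ hmono xstar y (hyx ▸ h)
    rw [hyx] at *
    rw [min_eq_left (by linarith)]
end
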